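/- Let X be a compact geodesic metric space with systole normalized to the value 2, i.e., sys(X) = 2. Let C ⊆ X be a subset containing the image of some rectifiable noncontractible loop of X. Then for every positive integer n, the set C admits a (1/n)-separated subset containing at least n+1 elements, i.e., there exist n+1 points of C whose pairwise distances are all at least 1/n. -/

import Mathlib

/-!
If every point of the noncontractible rectifiable loop `γ` based at `x` stayed within distance
`r < 1` of `x`, join `x` by geodesics `ρ` to the points of `γ`. For `s, t` close enough, the arc
`γ|[s,t]` is shorter than `sys(X) - 2r`, so the loop `ρ(γ s) · γ|[s,t] · ρ(γ t)⁻¹` is shorter than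
the systole, hence contractible. Since `[0,1]` is connected, the relation
`ρ(γ s) · γ|[s,t] ≃ ρ(γ t)` then holds for `s = 0, t = 1`, making `γ` contractible. So some point
of `γ` lies at distance at least `1` from `x`, and the intermediate value theorem for
`dist(x, ·)` along `γ` gives points at distances `0, 1/n, …, 1` from `x`, pairwise `1/n` apart.
-/

/-- The length of a path in a pseudo-emetric space: its total variation. -/
noncomputable def pathLength {X : Type*} [PseudoEMetricSpace X] {x y : X} (γ : Path x y) :
    ENNReal :=
  eVariationOn γ Set.univ

/-- A metric space is geodesic if any two points are joined by a path whose
length equals the distance between them. -/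
def IsGeodesicSpace (X : Type*) [MetricSpace X] : Prop :=
  ∀ x y : X, ∃ γ : Path x y, pathLength γ = edist x y

/-- The systole of a metric space: the infimum of lengths of noncontractible loops. -/
noncomputable def systole (X : Type*) [MetricSpace X] : ENNReal :=
  sInf {L | ∃ (x : X) (γ : Path x x), ¬γ.Homotopic (Path.refl x) ∧ pathLength γ = L}

/-- The pointed systole at `p`: the infimum of lengths of noncontractible loops based at `p`. -/
noncomputable def pointedSystole (X : Type*) [MetricSpace X] (p : X) : ENNReal :=
  sInf {L | ∃ γ : Path p p, ¬γ.Homotopic (Path.refl p) ∧ pathLength γ = L}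

open Set unitInterval Filter Topology
open scoped ENNReal

theorem BoundedVariationOn.eventually_eVariationOn_uIcc_lt {α E : Type*} [LinearOrder α]
    [TopologicalSpace α] [OrderTopology α] [PseudoEMetricSpace E] {f : α → E}
    (hf : BoundedVariationOn f univ) {x : α} (hx : ContinuousAt f x) {ε : ℝ≥0∞} (hε : 0 < ε) :
    ∀ᶠ y in 𝓝 x, eVariationOn f (uIcc x y) < ε := by
  have hl := hf.tendsto_eVariationOn_Icc_zero_left hx.continuousWithinAt
  have hr := hf.tendsto_eVariationOn_Icc_zero_right x hx.continuousWithinAt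
  rw [nhdsWithin_univ] at hl hr
  filter_upwards [hl.eventually (gt_mem_nhds hε), hr.eventually (gt_mem_nhds hε)] with y hyl hyr
  rcases le_total x y with hxy | hyx
  · simpa [uIcc_of_le hxy] using hyr
  · simpa [uIcc_of_ge hyx] using hyl

theorem exists_fin_pairwise_dist_ge_of_isPreconnected {X : Type*} [PseudoMetricSpace X]
    {S : Set X} (hS : IsPreconnected S) {x y : X} (hx : x ∈ S) (hy : y ∈ S) (n : ℕ) :
    ∃ p : Fin (n + 1) → X, (∀ i, p i ∈ S) ∧
      ∀ i j, i ≠ j → dist x y / n ≤ dist (p i) (p j) := by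
  have hval : ∀ i : Fin (n + 1), ∃ z ∈ S, dist z x = i * (dist x y / n) := fun i => by
    refine hS.intermediate_value hx hy (continuous_id.dist continuous_const).continuousOn ⟨?_, ?_⟩
    · simp only [id, dist_self]
      positivity
    · calc (i : ℝ) * (dist x y / n) ≤ n * (dist x y / n) := by gcongr; exact_mod_cast i.is_le
        _ ≤ dist y x := by
          rw [dist_comm]
          rcases n.eq_zero_or_pos with rfl | hn
          · simp
          · rw [mul_div_cancel₀ _ (by positivity)]
  choose p hpS hp using hval
  refine ⟨p, hpS, fun i j hij => ?_⟩
  have hij_int : ((i : ℕ) : ℤ) ≠ (j : ℕ) := by exact_mod_cast Fin.val_ne_of_ne hij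
  have hone : (1 : ℝ) ≤ |(i : ℝ) - j| := by exact_mod_cast Int.one_le_abs (sub_ne_zero.2 hij_int)
  calc dist x y / n ≤ |(i : ℝ) - j| * (dist x y / n) := le_mul_of_one_le_left (by positivity) hone
    _ = |dist (p i) x - dist (p j) x| := by
      rw [hp, hp, ← sub_mul, abs_mul, abs_of_nonneg (by positivity : 0 ≤ dist x y / n)]
    _ ≤ dist (p i) (p j) := abs_dist_sub_le ..

namespace Path.Homotopic

variable {X : Type*} [TopologicalSpace X] {x y : X}

theorem of_trans_symm {p q : Path x y}
    (h : (p.trans q.symm).Homotopic (Path.refl x)) : p.Homotopic q := by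
  rw [← Quotient.eq, Quotient.mk_trans, Quotient.mk_symm, Quotient.mk_refl] at h
  rw [← Quotient.eq, ← Quotient.trans_refl (Quotient.mk p), ← Quotient.symm_trans (Quotient.mk q),
    ← Quotient.trans_assoc, h, Quotient.refl_trans]

theorem refl_of_trans_self {p : Path x y} {γ : Path y y}
    (h : (p.trans γ).Homotopic p) : γ.Homotopic (Path.refl y) := by
  rw [← Quotient.eq, Quotient.mk_trans] at h
  rw [← Quotient.eq, Quotient.mk_refl, ← Quotient.refl_trans (Quotient.mk γ),
    ← Quotient.symm_trans (Quotient.mk p), Quotient.trans_assoc, h]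

theorem trans_of_eventually_subpath {a b : X} (ρ : ∀ p : X, Path x p) (γ : Path a b)
    (h : ∀ s, ∀ᶠ t in 𝓝 s, ((ρ (γ s)).trans (γ.subpath s t)).Homotopic (ρ (γ t))) :
    ((ρ a).trans γ).Homotopic (ρ b) := by
  let R : I → I → Prop := fun s t =>
    (Quotient.mk (ρ (γ s))).trans (Quotient.mk (γ.subpath s t)) = Quotient.mk (ρ (γ t))
  have hR : ∀ s t, R s t ↔ ((ρ (γ s)).trans (γ.subpath s t)).Homotopic (ρ (γ t)) := fun s t => by
    simp only [R, ← Quotient.mk_trans, Quotient.eq]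
  have hsymm : Std.Symm R := ⟨fun s t hst => by
    simp only [R, ← Path.symm_subpath γ s t, Quotient.mk_symm, ← hst, Quotient.trans_assoc,
      Quotient.trans_symm, Quotient.trans_refl]⟩
  have htrans : IsTrans I R := ⟨fun s t u hst htu => by
    have hsplit : Quotient.mk (γ.subpath s u) =
        (Quotient.mk (γ.subpath s t)).trans (Quotient.mk (γ.subpath t u)) := by
      rw [← Quotient.mk_trans, Quotient.eq]
      exact ⟨(Path.Homotopy.subpathTransSubpath γ s t u).symm⟩
    simp only [R, ← htu, ← hst, hsplit, Quotient.trans_assoc]⟩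
  have hzero_one := (hR 0 1).1
    (PreconnectedSpace.induction₂ R (fun s => (h s).mono fun t => (hR s t).2) htrans 0 1)
  rw [Path.subpath_zero_one] at hzero_one
  have hcast : ∀ {a' b' : X} (ha : a' = a) (hb : b' = b), γ ≍ γ.cast ha hb := by
    rintro _ _ rfl rfl
    rfl
  convert hzero_one using 2
  · exact γ.target.symm
  · exact γ.source.symm
  · rw [γ.source]
  · exact hcast _ _

end Path.Homotopic

section Length

variable {X : Type*} [PseudoEMetricSpace X] {x y z : X}

theorem eVariationOn_extend_le_pathLength (p : Path x y) (s : Set ℝ) :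
    eVariationOn p.extend s ≤ pathLength p :=
  eVariationOn.comp_le_of_monotoneOn _ _ ((monotone_projIcc _).monotoneOn _) (mapsTo_univ _ _)

theorem pathLength_symm_le (p : Path x y) : pathLength p.symm ≤ pathLength p :=
  eVariationOn.comp_le_of_antitoneOn _ _ (fun _ _ _ _ h => symm_le_symm.2 h) (mapsTo_univ _ _)

theorem pathLength_trans_le (p : Path x y) (q : Path y z) :
    pathLength (p.trans q) ≤ pathLength p + pathLength q := by
  let half : I := ⟨1 / 2, by norm_num, by norm_num⟩
  have hsplit := eVariationOn.Icc_add_Icc (p.trans q) (s := univ) (nonneg' (t := half))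
    (le_one' (t := half)) (mem_univ half)
  rw [univ_inter, univ_inter, univ_inter,
    eq_univ_of_forall fun t : I => mem_Icc.2 ⟨nonneg', le_one'⟩] at hsplit
  rw [pathLength, ← hsplit]
  gcongr
  · have : EqOn (p.trans q) (p.extend ∘ fun t : I => 2 * (t : ℝ)) (Icc 0 half) := fun t ht => by
      change ite _ _ _ = _
      rw [if_pos (show (t : ℝ) ≤ 1 / 2 from ht.2)]
      rfl
    rw [eVariationOn.eq_of_eqOn this]
    exact (eVariationOn.comp_le_of_monotoneOn _ _
      (fun s _ t _ hst => by gcongr) (mapsTo_univ _ _)).trans (eVariationOn_extend_le_pathLength _ _)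
  · have : EqOn (p.trans q) (q.extend ∘ fun t : I => 2 * (t : ℝ) - 1) (Icc half 1) := fun t ht => by
      change ite _ _ _ = _
      split_ifs with ht'
      · have : (t : ℝ) = 1 / 2 := le_antisymm ht' ht.1
        simp [this]
      · rfl
    rw [eVariationOn.eq_of_eqOn this]
    exact (eVariationOn.comp_le_of_monotoneOn _ _
      (fun s _ t _ hst => by gcongr) (mapsTo_univ _ _)).trans (eVariationOn_extend_le_pathLength _ _)

theorem pathLength_subpath_le (γ : Path x y) (s t : I) :
    pathLength (γ.subpath s t) ≤ eVariationOn γ (uIcc s t) := by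
  wlog hst : s ≤ t generalizing s t
  · rw [← Path.symm_subpath, uIcc_comm]
    exact (pathLength_symm_le _).trans (this t s (le_of_not_ge hst))
  refine eVariationOn.comp_le_of_monotoneOn _ _ (fun u _ v _ huv => ?_) (fun u _ => ?_)
  · rw [← Subtype.coe_le_coe] at huv hst ⊢
    simp only [Icc.coe_convexComb]
    nlinarith
  · rw [uIcc_of_le hst]
    exact ⟨Icc.le_convexComb hst u, Icc.convexComb_le hst u⟩

end Length

section Systole

variable {X : Type*} [MetricSpace X]

theorem homotopic_refl_of_pathLength_lt_systole {x : X} {γ : Path x x}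
    (h : pathLength γ < systole X) : γ.Homotopic (Path.refl x) := by
  by_contra hγ
  exact (sInf_le ⟨x, γ, hγ, rfl⟩ : systole X ≤ pathLength γ).not_gt h

theorem systole_le_two_mul_of_forall_edist_le (hgeo : IsGeodesicSpace X) {x : X} {γ : Path x x}
    (hγ : ¬γ.Homotopic (Path.refl x)) (hrect : pathLength γ ≠ ⊤) {r : ℝ≥0∞}
    (hr : ∀ t, edist x (γ t) ≤ r) : systole X ≤ 2 * r := by
  by_contra! hlt
  choose ρ hρ using hgeo x
  refine hγ (Path.Homotopic.refl_of_trans_self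
    (Path.Homotopic.trans_of_eventually_subpath ρ γ fun s => ?_))
  have hbv : BoundedVariationOn γ univ := hrect
  filter_upwards [hbv.eventually_eVariationOn_uIcc_lt γ.continuous.continuousAt
    (tsub_pos_of_lt hlt)] with t ht
  refine Path.Homotopic.of_trans_symm (homotopic_refl_of_pathLength_lt_systole ?_)
  calc _ ≤ pathLength (ρ (γ s)) + pathLength (γ.subpath s t) + pathLength (ρ (γ t)) := by
        grw [pathLength_trans_le, pathLength_trans_le, pathLength_symm_le]
    _ ≤ r + eVariationOn γ (uIcc s t) + r := by
        rw [hρ, hρ]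
        gcongr
        exacts [hr s, pathLength_subpath_le γ s t, hr t]
    _ = eVariationOn γ (uIcc s t) + 2 * r := by ring
    _ < systole X := lt_tsub_iff_right.mp ht

end Systole

theorem separated_set_in_essential_curve_general {X : Type*} [MetricSpace X]
    (hgeo : IsGeodesicSpace X) (hsys : systole X = 2)
    (C : Set X) (x : X) (γ : Path x x) (hnc : ¬γ.Homotopic (Path.refl x))
    (hrect : pathLength γ ≠ ⊤) (hsub : Set.range ⇑γ ⊆ C)
    (n : ℕ) :
    ∃ pts : Fin (n + 1) → X, (∀ i, pts i ∈ C) ∧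
      ∀ i j, i ≠ j → (1 : ℝ) / n ≤ dist (pts i) (pts j) := by
  obtain ⟨t, -, ht⟩ := isCompact_univ.exists_isMaxOn univ_nonempty
    (f := fun s => edist x (γ s)) (by fun_prop)
  have hfar : 1 ≤ dist x (γ t) := by
    have h : systole X ≤ 2 * edist x (γ t) :=
      systole_le_two_mul_of_forall_edist_le hgeo hnc hrect fun s => ht (mem_univ s)
    rw [hsys, edist_dist] at h
    rw [← ENNReal.one_le_ofReal]
    exact (ENNReal.mul_le_mul_iff_right two_ne_zero ENNReal.ofNat_ne_top).1 (by simpa using h)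
  obtain ⟨pts, hpts, hsep⟩ := exists_fin_pairwise_dist_ge_of_isPreconnected
    (isConnected_range γ.continuous).isPreconnected ⟨0, γ.source⟩ (mem_range_self t) n
  exact ⟨pts, fun i => hsub (hpts i), fun i j hij =>
    (div_le_div_of_nonneg_right hfar n.cast_nonneg).trans (hsep i j hij)⟩

/-- If `sys(X) = 2` and `C ⊆ X` contains the image of a rectifiable
noncontractible loop, then for every `n ≥ 1` the set `C` admits a `(1/n)`-separated
subset with at least `n+1` elements. -/
theorem separated_set_in_essential_curve {X : Type*} [MetricSpace X] [CompactSpace X]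
    (hgeo : IsGeodesicSpace X) (hsys : systole X = 2)
    (C : Set X) (x : X) (γ : Path x x) (hnc : ¬γ.Homotopic (Path.refl x))
    (hrect : pathLength γ ≠ ⊤) (hsub : Set.range ⇑γ ⊆ C)
    (n : ℕ) (hn : 0 < n) :
    ∃ pts : Fin (n + 1) → X, (∀ i, pts i ∈ C) ∧
      ∀ i j, i ≠ j → (1 : ℝ) / n ≤ dist (pts i) (pts j) :=
  separated_set_in_essential_curve_general hgeo hsys C x γ hnc hrect hsub n
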